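/- arXiv:1907.11547 — 2 statements merged into one kernel-verified Lean document; each statement's English description precedes it below -/
import Mathlib

section
/- Let (E, μ) be a σ-finite measure space, let T ≥ 1, and let p : E → [0,∞], q_k : E × E → [0,∞] (for k = 1, …, T−1), and g_k, h_k : E → [0,∞] (for k = 1, …, T) all be measurable. Define the joint function J(x_1,…,x_T) := p(x_1) · ∏_{k=1}^{T−1} q_k(x_{k+1}, x_k) · ∏_{k=1}^{T} g_k(x_k) h_k(x_k). Define forward messages recursively by m_fp^1 := p, m_fe1^k := m_fp^k · g_k, m_fe2^k := m_fe1^k · h_k, and m_fp^{k+1}(x') := ∫ q_k(x', x) m_fe2^k(x) dμ(x); define backward messages by m_bp^T :≡ 1, m_be1^k := m_bp^k · h_k, m_be2^k := m_be1^k · g_k, and m_bp^k(x) := ∫ q_k(x', x) m_be2^{k+1}(x') dμ(x') for k < T. Then for every k ∈ {1, …, T} and every x ∈ E, the marginal of J over all coordinates other than x_k, namely ∫ ⋯ ∫ J(x_1, …, x_{k−1}, x, x_{k+1}, …, x_T) ∏_{j ≠ k} dμ(x_j) (computed as an iterated Lebesgue integral of a nonnegative function), equals m_fp^k(x) · m_be2^k(x)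 = m_fe1^k(x) · m_be1^k(x) = m_fe2^k(x) · m_bp^k(x). -/
/-! Cut the chain at `k`: the joint function is the product of a forward factor, depending only
on the coordinates `≤ k`, and a backward factor, depending only on the coordinates `≥ k`. By
Tonelli the coordinates `< k` can be integrated out of the forward factor one at a time, and each
such integration, after pulling out the factors free of the current variable, is one step of the
forward recursion; symmetrically for the coordinates `> k` and the backward recursion. Hence the
marginal at `k` is `m_fp^k g_k h_k · m_bp^k`, and the three factorizations are rearrangements of
this product. -/

open MeasureTheory ENNReal

/-- The joint function
`J(x₁,…,x_T) = p(x₁) · ∏_{k=1}^{T−1} q_k(x_{k+1}, x_k) · ∏_{k=1}^{T} g_k(x_k) h_k(x_k)`,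
read off an infinite tuple `x : ℕ → E` (coordinates outside `1,…,T` are ignored). -/
noncomputable def jointFun {E : Type*} (T : ℕ) (p : E → ℝ≥0∞)
    (q : ℕ → E → E → ℝ≥0∞) (g h : ℕ → E → ℝ≥0∞) (x : ℕ → E) : ℝ≥0∞ :=
  p (x 1) * (∏ k ∈ Finset.Icc 1 (T - 1), q k (x (k + 1)) (x k)) *
    ∏ k ∈ Finset.Icc 1 T, g k (x k) * h k (x k)

/-- Extend a configuration of the coordinates `{1,…,T} \ {k}` to a full tuple `ℕ → E`
by putting `x` in the `k`-th coordinate (and anywhere outside `{1,…,T}`). -/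
noncomputable def extendAt {E : Type*} (T k : ℕ) (x : E)
    (z : ((Finset.Icc 1 T).erase k : Finset ℕ) → E) : ℕ → E :=
  fun j => if hj : j ∈ (Finset.Icc 1 T).erase k then z ⟨j, hj⟩ else x

section Marginal

variable {δ : Type*} [DecidableEq δ] {X : δ → Type*} [∀ i, MeasurableSpace (X i)]

theorem MeasureTheory.lmarginal_mul_left_of_dependsOn (μ : ∀ i, Measure (X i)) {s : Finset δ}
    {C f : (∀ i, X i) → ℝ≥0∞} (hC : DependsOn C (↑s)ᶜ) (hf : Measurable f)
    (x : ∀ i, X i) : (∫⋯∫⁻_s, (fun x => C x * f x) ∂μ) x = C x * (∫⋯∫⁻_s, f ∂μ) x := by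
  have hCx : ∀ z, C (Function.updateFinset x s z) = C x := fun z =>
    hC fun i (hi : i ∉ s) => by simp [Function.updateFinset, hi]
  simp only [lmarginal, hCx]
  exact lintegral_const_mul _ (hf.comp measurable_updateFinset)

end Marginal

section Smoothing

open Finset

variable {E : Type*} (p : E → ℝ≥0∞) (q : ℕ → E → E → ℝ≥0∞) (g h : ℕ → E → ℝ≥0∞)

noncomputable def forwardProd (k : ℕ) (x : ℕ → E) : ℝ≥0∞ :=
  p (x 1) * (∏ j ∈ Ico 1 k, q j (x (j + 1)) (x j)) * ∏ j ∈ Icc 1 k, g j (x j) * h j (x j)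

noncomputable def backwardProd (T k : ℕ) (x : ℕ → E) : ℝ≥0∞ :=
  (∏ j ∈ Ico k T, q j (x (j + 1)) (x j)) * ∏ j ∈ Ioc k T, g j (x j) * h j (x j)

theorem Nat.Icc_one_eq_Ioc_zero (n : ℕ) : Icc 1 n = Ioc 0 n := Icc_add_one_left_eq_Ioc 0 n

theorem jointFun_eq_forwardProd (T : ℕ) : jointFun T p q g h = forwardProd p q g h T := by
  have hIcc : Icc 1 (T - 1) = Ico 1 T := by ext j; simp only [mem_Icc, mem_Ico]; omega
  ext x
  simp only [jointFun, forwardProd, hIcc]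

theorem forwardProd_succ {k : ℕ} (hk : 1 ≤ k) :
    forwardProd p q g h (k + 1) = fun x => g (k + 1) (x (k + 1)) * h (k + 1) (x (k + 1)) *
      (q k (x (k + 1)) (x k) * forwardProd p q g h k x) := by
  ext x
  simp only [forwardProd, prod_Ico_succ_top hk, Nat.Icc_one_eq_Ioc_zero,
    prod_Ioc_succ_top (Nat.zero_le k)]
  ring

theorem backwardProd_eq_mul_succ {T k : ℕ} (hkT : k < T) :
    backwardProd q g h T k = fun x => q k (x (k + 1)) (x k) *
      (g (k + 1) (x (k + 1)) * h (k + 1) (x (k + 1))) * backwardProd q g h T (k + 1) x := by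
  ext x
  have hIoc : Ioc k T = insert (k + 1) (Ioc (k + 1) T) := by
    rw [← Icc_add_one_left_eq_Ioc, Ioc_insert_left hkT]
  simp only [backwardProd, prod_eq_prod_Ico_succ_bot hkT, hIoc, prod_insert left_notMem_Ioc]
  ring

theorem forwardProd_mul_backwardProd {T k : ℕ} (hk : 1 ≤ k) (hkT : k ≤ T) :
    forwardProd p q g h T = fun x => forwardProd p q g h k x * backwardProd q g h T k x := by
  ext x
  simp only [forwardProd, backwardProd, Nat.Icc_one_eq_Ioc_zero,
    ← prod_Ico_consecutive _ hk hkT, ← prod_Ioc_consecutive _ (Nat.zero_le k) hkT]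
  ring

theorem dependsOn_forwardProd {k : ℕ} (hk : 1 ≤ k) :
    DependsOn (forwardProd p q g h k) (Set.Iic k) := by
  intro x y hxy
  have hxy' : ∀ j, j ≤ k → x j = y j := fun j hj => hxy j hj
  simp only [forwardProd]
  rw [hxy' 1 hk]
  congr 1
  · congr 1
    refine prod_congr rfl fun j hj => ?_
    rw [mem_Ico] at hj
    rw [hxy' j (by omega), hxy' (j + 1) (by omega)]
  · refine prod_congr rfl fun j hj => ?_
    rw [hxy' j (mem_Icc.1 hj).2]

variable {p q g h} [MeasurableSpace E]

theorem measurable_forwardProd (hp : Measurable p) (hq : ∀ k, Measurable (Function.uncurry (q k)))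
    (hg : ∀ k, Measurable (g k)) (hh : ∀ k, Measurable (h k)) (k : ℕ) :
    Measurable (forwardProd p q g h k) := by
  unfold forwardProd; fun_prop

theorem measurable_backwardProd (hq : ∀ k, Measurable (Function.uncurry (q k)))
    (hg : ∀ k, Measurable (g k)) (hh : ∀ k, Measurable (h k)) (T k : ℕ) :
    Measurable (backwardProd q g h T k) := by
  unfold backwardProd; fun_prop

end Smoothing

section Messages

open Finset

variable {E : Type*} [MeasurableSpace E] {μ : Measure E} [SigmaFinite μ]
  {p : E → ℝ≥0∞} {q : ℕ → E → E → ℝ≥0∞} {g h : ℕ → E → ℝ≥0∞} {mfp mbp : ℕ → E → ℝ≥0∞} {T : ℕ}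

theorem lmarginal_forwardProd (hp : Measurable p)
    (hq : ∀ k, Measurable (Function.uncurry (q k)))
    (hg : ∀ k, Measurable (g k)) (hh : ∀ k, Measurable (h k)) (hfp1 : mfp 1 = p)
    (hfp : ∀ k, 1 ≤ k → k ≤ T - 1 → ∀ x' : E,
      mfp (k + 1) x' = ∫⁻ x, q k x' x * (mfp k x * g k x * h k x) ∂μ)
    {k : ℕ} (hk : 1 ≤ k) (hkT : k ≤ T) (x : ℕ → E) :
    (∫⋯∫⁻_(Ico 1 k), forwardProd p q g h k ∂fun _ => μ) x =
      mfp k (x k) * g k (x k) * h k (x k) := by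
  induction k, hk using Nat.le_induction generalizing x with
  | base => simp [forwardProd, hfp1, mul_assoc]
  | succ k hk ih =>
    have hf : Measurable fun y => q k (y (k + 1)) (y k) * forwardProd p q g h k y :=
      (by fun_prop : Measurable fun y : ℕ → E => q k (y (k + 1)) (y k)).mul
        (measurable_forwardProd hp hq hg hh k)
    have hgh : DependsOn (fun y : ℕ → E => g (k + 1) (y (k + 1)) * h (k + 1) (y (k + 1)))
        (↑(Ico 1 (k + 1)))ᶜ := fun y y' hyy => by simp only [hyy (k + 1) (by simp)]
    have hq' : DependsOn (fun y : ℕ → E => q k (y (k + 1)) (y k)) (↑(Ico 1 k))ᶜ :=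
      fun y y' hyy => by simp only [hyy (k + 1) (by simp), hyy k (by simp)]
    rw [forwardProd_succ p q g h hk, lmarginal_mul_left_of_dependsOn _ hgh hf,
      Nat.Ico_succ_right_eq_insert_Ico hk, lmarginal_insert _ hf right_notMem_Ico]
    simp only [lmarginal_mul_left_of_dependsOn _ hq' (measurable_forwardProd hp hq hg hh k),
      ih (Nat.le_of_succ_le hkT), Function.update_self,
      Function.update_of_ne (by omega : k + 1 ≠ k)]
    rw [← hfp k hk (by omega)]
    ring

theorem lmarginal_backwardProd (hq : ∀ k, Measurable (Function.uncurry (q k)))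
    (hg : ∀ k, Measurable (g k)) (hh : ∀ k, Measurable (h k)) (hbpT : ∀ x : E, mbp T x = 1)
    (hbp : ∀ k, 1 ≤ k → k < T → ∀ x : E,
      mbp k x = ∫⁻ x', q k x' x * (mbp (k + 1) x' * h (k + 1) x' * g (k + 1) x') ∂μ)
    {k : ℕ} (hk : 1 ≤ k) (hkT : k ≤ T) (x : ℕ → E) :
    (∫⋯∫⁻_(Ioc k T), backwardProd q g h T k ∂fun _ => μ) x = mbp k (x k) := by
  induction hkT using Nat.decreasingInduction generalizing x with
  | self => simp [backwardProd, hbpT]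
  | of_succ k hkT ih =>
    have hC : DependsOn (fun y : ℕ → E => q k (y (k + 1)) (y k) *
        (g (k + 1) (y (k + 1)) * h (k + 1) (y (k + 1)))) (↑(Ioc (k + 1) T))ᶜ :=
      fun y y' hyy => by simp only [hyy (k + 1) (by simp), hyy k (by simp)]
    rw [← Icc_add_one_left_eq_Ioc, ← Ioc_insert_left hkT,
      lmarginal_insert _ (measurable_backwardProd hq hg hh T k) left_notMem_Ioc,
      backwardProd_eq_mul_succ q g h hkT]
    simp only [lmarginal_mul_left_of_dependsOn _ hC (measurable_backwardProd hq hg hh T (k + 1)),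
      ih (by omega), Function.update_self, Function.update_of_ne (by omega : k ≠ k + 1)]
    rw [hbp k hk hkT (x k)]
    exact lintegral_congr fun t => by ring

theorem lmarginal_jointFun (hp : Measurable p) (hq : ∀ k, Measurable (Function.uncurry (q k)))
    (hg : ∀ k, Measurable (g k)) (hh : ∀ k, Measurable (h k)) (hfp1 : mfp 1 = p)
    (hfp : ∀ k, 1 ≤ k → k ≤ T - 1 → ∀ x' : E,
      mfp (k + 1) x' = ∫⁻ x, q k x' x * (mfp k x * g k x * h k x) ∂μ)
    (hbpT : ∀ x : E, mbp T x = 1)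
    (hbp : ∀ k, 1 ≤ k → k < T → ∀ x : E,
      mbp k x = ∫⁻ x', q k x' x * (mbp (k + 1) x' * h (k + 1) x' * g (k + 1) x') ∂μ)
    {k : ℕ} (hk : 1 ≤ k) (hkT : k ≤ T) (x : ℕ → E) :
    (∫⋯∫⁻_((Icc 1 T).erase k), jointFun T p q g h ∂fun _ => μ) x =
      mbp k (x k) * (mfp k (x k) * g k (x k) * h k (x k)) := by
  have hsplit : (Icc 1 T).erase k = Ico 1 k ∪ Ioc k T := by
    ext j; simp only [mem_erase, mem_Icc, mem_union, mem_Ico, mem_Ioc]; omega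
  have hdisj : Disjoint (Ico 1 k) (Ioc k T) :=
    disjoint_left.2 fun j hj hj' => by simp only [mem_Ico, mem_Ioc] at hj hj'; omega
  have hfwd : DependsOn (forwardProd p q g h k) (↑(Ioc k T))ᶜ :=
    (dependsOn_forwardProd p q g h hk).mono fun j hj => by simp_all
  have hbwd : DependsOn (fun y : ℕ → E => mbp k (y k)) (↑(Ico 1 k))ᶜ :=
    fun y y' hyy => by simp only [hyy k (by simp)]
  have hinner : ∫⋯∫⁻_(Ioc k T), jointFun T p q g h ∂(fun _ => μ) =
      fun y => mbp k (y k) * forwardProd p q g h k y := by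
    ext y
    rw [jointFun_eq_forwardProd, forwardProd_mul_backwardProd p q g h hk hkT,
      lmarginal_mul_left_of_dependsOn _ hfwd (measurable_backwardProd hq hg hh T k),
      lmarginal_backwardProd hq hg hh hbpT hbp hk hkT, mul_comm]
  rw [hsplit, lmarginal_union _ _ (jointFun_eq_forwardProd p q g h T ▸
      measurable_forwardProd hp hq hg hh T) hdisj, hinner,
    lmarginal_mul_left_of_dependsOn _ hbwd (measurable_forwardProd hp hq hg hh k),
    lmarginal_forwardProd hp hq hg hh hfp1 hfp hk hkT]

end Messages

theorem lintegral_extendAt_eq_lmarginal {E : Type*} [MeasurableSpace E] (μ : Measure E)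
    (T k : ℕ) (x : E) (f : (ℕ → E) → ℝ≥0∞) :
    ∫⁻ z, f (extendAt T k x z) ∂(Measure.pi fun _ => μ) =
      (∫⋯∫⁻_((Finset.Icc 1 T).erase k), f ∂fun _ => μ) fun _ => x :=
  rfl

theorem smoothing_marginal_factorizations_general {E : Type*} [MeasurableSpace E]
    (μ : Measure E) [SigmaFinite μ] (T : ℕ)
    (p : E → ℝ≥0∞) (q : ℕ → E → E → ℝ≥0∞) (g h : ℕ → E → ℝ≥0∞)
    (hp : Measurable p) (hq : ∀ k, Measurable (Function.uncurry (q k)))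
    (hg : ∀ k, Measurable (g k)) (hh : ∀ k, Measurable (h k))
    (mfp mbp : ℕ → E → ℝ≥0∞)
    (hfp1 : mfp 1 = p)
    (hfp : ∀ k, 1 ≤ k → k ≤ T - 1 → ∀ x' : E,
      mfp (k + 1) x' = ∫⁻ x, q k x' x * (mfp k x * g k x * h k x) ∂μ)
    (hbpT : ∀ x : E, mbp T x = 1)
    (hbp : ∀ k, 1 ≤ k → k < T → ∀ x : E,
      mbp k x = ∫⁻ x', q k x' x * (mbp (k + 1) x' * h (k + 1) x' * g (k + 1) x') ∂μ) :
    ∀ k, 1 ≤ k → k ≤ T → ∀ x : E,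
      (∫⁻ z : ((Finset.Icc 1 T).erase k : Finset ℕ) → E,
          jointFun T p q g h (extendAt T k x z) ∂(Measure.pi fun _ => μ)) =
        mfp k x * (mbp k x * h k x * g k x) ∧
      (∫⁻ z : ((Finset.Icc 1 T).erase k : Finset ℕ) → E,
          jointFun T p q g h (extendAt T k x z) ∂(Measure.pi fun _ => μ)) =
        (mfp k x * g k x) * (mbp k x * h k x) ∧
      (∫⁻ z : ((Finset.Icc 1 T).erase k : Finset ℕ) → E,
          jointFun T p q g h (extendAt T k x z) ∂(Measure.pi fun _ => μ)) =
        (mfp k x * g k x * h k x) * mbp k x := by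
  intro k hk hkT x
  have hmarginal := lmarginal_jointFun hp hq hg hh hfp1 hfp hbpT hbp hk hkT fun _ => x
  rw [← lintegral_extendAt_eq_lmarginal] at hmarginal
  refine ⟨?_, ?_, ?_⟩ <;> rw [hmarginal] <;> ring

/-- Sum-product message passing computes the marginals of the joint smoothing
function: for every `k ∈ {1,…,T}`, the marginal of `J` over all coordinates other
than `x_k` equals `m_fp^k · m_be2^k = m_fe1^k · m_be1^k = m_fe2^k · m_bp^k`, where
`m_fe1^k = m_fp^k g_k`, `m_fe2^k = m_fe1^k h_k`, `m_be1^k = m_bp^k h_k`,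
`m_be2^k = m_be1^k g_k`, and `m_fp`, `m_bp` satisfy the forward/backward
recursions. -/
theorem smoothing_marginal_factorizations {E : Type*} [MeasurableSpace E]
    (μ : Measure E) [SigmaFinite μ] (T : ℕ) (hT : 1 ≤ T)
    (p : E → ℝ≥0∞) (q : ℕ → E → E → ℝ≥0∞) (g h : ℕ → E → ℝ≥0∞)
    (hp : Measurable p) (hq : ∀ k, Measurable (Function.uncurry (q k)))
    (hg : ∀ k, Measurable (g k)) (hh : ∀ k, Measurable (h k))
    (mfp mbp : ℕ → E → ℝ≥0∞)
    (hfp1 : mfp 1 = p)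
    (hfp : ∀ k, 1 ≤ k → k ≤ T - 1 → ∀ x' : E,
      mfp (k + 1) x' = ∫⁻ x, q k x' x * (mfp k x * g k x * h k x) ∂μ)
    (hbpT : ∀ x : E, mbp T x = 1)
    (hbp : ∀ k, 1 ≤ k → k < T → ∀ x : E,
      mbp k x = ∫⁻ x', q k x' x * (mbp (k + 1) x' * h (k + 1) x' * g (k + 1) x') ∂μ) :
    ∀ k, 1 ≤ k → k ≤ T → ∀ x : E,
      (∫⁻ z : ((Finset.Icc 1 T).erase k : Finset ℕ) → E,
          jointFun T p q g h (extendAt T k x z) ∂(Measure.pi fun _ => μ)) =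
        mfp k x * (mbp k x * h k x * g k x) ∧
      (∫⁻ z : ((Finset.Icc 1 T).erase k : Finset ℕ) → E,
          jointFun T p q g h (extendAt T k x z) ∂(Measure.pi fun _ => μ)) =
        (mfp k x * g k x) * (mbp k x * h k x) ∧
      (∫⁻ z : ((Finset.Icc 1 T).erase k : Finset ℕ) → E,
          jointFun T p q g h (extendAt T k x z) ∂(Measure.pi fun _ => μ)) =
        (mfp k x * g k x * h k x) * mbp k x :=
  smoothing_marginal_factorizations_general μ T p q g h hp hq hg hh mfp mbp hfp1 hfp hbpT hbp
end

section
/- Let T and D_L be positive integers, let D_N be a nonnegative integer, set D := D_L + D_N, and let N_p ≥ 2 be an integer. Define M_MPF := N_p·T·(2·D_L² + 2·D_L + D_N + 1), M_SDBF := T·(2·D_L² + 2·D_L + N_p·D_N + N_p), M_RBSS := M_MPF + D_L² + D, and M_DDBSA := M_SDBF + N_p + D_L² + D. Then M_DDBSA < M_RBSS. (This establishes the paper's claim that the memory requirement of the disjoint double Bayesian smoothing algorithm is smaller than that of the Rao-Blackwellized serial smoother.) -/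
/-!
Let `K := 2 D_L² + 2 D_L`. Both algorithms store the nonlinear part and the particle weights
per particle and time step, but RBSS also stores a Kalman part of size `K` per particle, while
DDBSA stores it once per time step and pays only `N_p` extra. Hence
`M_RBSS - M_DDBSA = (N_p - 1) T K - N_p`, which is positive because `T K ≥ 4` and `N_p ≥ 2`.
-/

theorem Nat.add_lt_mul_of_two_le_of_three_le {n m : ℕ} (hn : 2 ≤ n) (hm : 3 ≤ m) :
    n + m < n * m := by
  nlinarith

/-- The memory requirement of the disjoint double Bayesian smoothing algorithm
(DDBSA) is smaller than that of the RBSS algorithm: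
`M_DDBSA = M_SDBF + N_p + D_L² + D < M_RBSS = M_MPF + D_L² + D`. -/
theorem mem_DDBSA_lt_RBSS (T DL : ℕ) (hT : 0 < T) (hDL : 0 < DL) (DN : ℕ)
    (Np : ℕ) (hNp : 2 ≤ Np) :
    T * (2 * DL ^ 2 + 2 * DL + Np * DN + Np) + Np + DL ^ 2 + (DL + DN) <
      Np * T * (2 * DL ^ 2 + 2 * DL + DN + 1) + DL ^ 2 + (DL + DN) := by
  have hK : 4 ≤ 2 * DL ^ 2 + 2 * DL := by nlinarith
  set K := 2 * DL ^ 2 + 2 * DL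
  have hTK : 3 ≤ T * K := by nlinarith
  have saving : Np + T * K < Np * (T * K) := Nat.add_lt_mul_of_two_le_of_three_le hNp hTK
  have split : Np * T * (K + DN + 1) + T * K = T * (K + Np * DN + Np) + Np * (T * K) := by ring
  omega
end
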